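/- arXiv:math/0612499 — 4 statements merged into one kernel-verified Lean document; each statement's English description precedes it below -/
import Mathlib

section
/- (Triple quad formula) If U, V and W are collinear points (i.e. the vectors V−U and W−U are linearly dependent), then the quadrances Q_W = Q(U,V), Q_U = Q(V,W) and Q_V = Q(U,W) satisfy (Q_U + Q_V + Q_W)² = 2(Q_U² + Q_V² + Q_W²). -/
/-!
Collinear points lie on a line `U + F • d`, say `V - U = s • d` and `W - U = t • d`, so the three
quadrances are `s² q`, `t² q` and `(t - s)² q` with `q = B d d`. The formula then reduces to the
polynomial identity `(s² + t² + (t - s)²)² = 2 (s⁴ + t⁴ + (t - s)⁴)`.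
-/

/-- The quadrance between points `U` and `W` with respect to the bilinear form `B`. -/
def quadrance {F : Type*} [Field F] {M : Type*} [AddCommGroup M] [Module F M]
    (B : LinearMap.BilinForm F M) (U W : M) : F :=
  B (W - U) (W - U)

/-- The spread between the lines `U W` and `X Z` with respect to the bilinear form `B`. -/
def spread {F : Type*} [Field F] {M : Type*} [AddCommGroup M] [Module F M]
    (B : LinearMap.BilinForm F M) (U W X Z : M) : F :=
  1 - (B (W - U) (Z - X)) ^ 2 / (quadrance B U W * quadrance B X Z)

section

variable {F : Type*} [Field F] {M : Type*} [AddCommGroup M] [Module F M]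

theorem exists_eq_smul_of_smul_add_smul_eq_zero {x y : M} {a b : F} (hab : a ≠ 0 ∨ b ≠ 0)
    (h : a • x + b • y = 0) : ∃ (d : M) (s t : F), x = s • d ∧ y = t • d := by
  rcases hab with ha | hb
  · refine ⟨y, -(b / a), 1, ?_, (one_smul F y).symm⟩
    rw [(eq_inv_smul_iff₀ ha).mpr (eq_neg_of_add_eq_zero_left h), smul_neg, smul_smul,
      neg_smul, inv_mul_eq_div]
  · refine ⟨x, 1, -(a / b), (one_smul F x).symm, ?_⟩
    rw [(eq_inv_smul_iff₀ hb).mpr (eq_neg_of_add_eq_zero_right h), smul_neg, smul_smul,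
      neg_smul, inv_mul_eq_div]

theorem quadrance_eq_of_sub_eq_smul (B : LinearMap.BilinForm F M) {U W d : M} {s : F}
    (h : W - U = s • d) : quadrance B U W = s ^ 2 * B d d := by
  simp only [quadrance, h, map_smul, LinearMap.smul_apply, smul_eq_mul]
  ring

end

theorem triple_quad_formula_general
    {F : Type*} [Field F]
    {M : Type*} [AddCommGroup M] [Module F M]
    (B : LinearMap.BilinForm F M)
    (U V W : M)
    (hcol : ∃ a b : F, (a ≠ 0 ∨ b ≠ 0) ∧ a • (V - U) + b • (W - U) = 0) :
    (quadrance B V W + quadrance B U W + quadrance B U V) ^ 2 =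
      2 * (quadrance B V W ^ 2 + quadrance B U W ^ 2 + quadrance B U V ^ 2) := by
  obtain ⟨a, b, hab, hdep⟩ := hcol
  obtain ⟨d, s, t, hV, hW⟩ := exists_eq_smul_of_smul_add_smul_eq_zero hab hdep
  have hVW : W - V = (t - s) • d := by
    rw [sub_smul, ← hV, ← hW, sub_sub_sub_cancel_right]
  rw [quadrance_eq_of_sub_eq_smul B hV, quadrance_eq_of_sub_eq_smul B hW,
    quadrance_eq_of_sub_eq_smul B hVW]
  ring

theorem triple_quad_formula
    {F : Type*} [Field F] (hchar : (2 : F) ≠ 0)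
    {M : Type*} [AddCommGroup M] [Module F M]
    (B : LinearMap.BilinForm F M) (hsym : ∀ x y : M, B x y = B y x)
    (U V W : M)
    (hcol : ∃ a b : F, (a ≠ 0 ∨ b ≠ 0) ∧ a • (V - U) + b • (W - U) = 0) :
    (quadrance B V W + quadrance B U W + quadrance B U V) ^ 2 =
      2 * (quadrance B V W ^ 2 + quadrance B U W ^ 2 + quadrance B U V ^ 2) :=
  triple_quad_formula_general B U V W hcol
end

section
/- (Spread law) Suppose a non-null triangle U, V, W (three distinct non-collinear points with Q_U, Q_V, Q_W all nonzero) has quadrances Q_W = Q(U,V), Q_U = Q(V,W), Q_V = Q(U,W) and spreads s_U, s_V, s_W. Then s_U/Q_U = s_V/Q_V = s_W/Q_W. -/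
section TriangleGram

variable {R M : Type*} [CommRing R] [AddCommGroup M] [Module R M] {B : LinearMap.BilinForm R M}

/-- A quarter of the quadrea of the triangle `U V W`. -/
def triangleGram (B : LinearMap.BilinForm R M) (U V W : M) : R :=
  B (V - U) (V - U) * B (W - U) (W - U) - B (V - U) (W - U) ^ 2

theorem triangleGram_swap (hB : B.IsSymm) (U V W : M) :
    triangleGram B U V W = triangleGram B U W V := by
  rw [triangleGram, triangleGram, hB.eq (W - U) (V - U)]
  ring

theorem triangleGram_shift (hB : B.IsSymm) (U V W : M) :
    triangleGram B V U W = triangleGram B U V W := by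
  have hU : U - V = -(V - U) := (neg_sub V U).symm
  have hW : W - V = (W - U) - (V - U) := (sub_sub_sub_cancel_right W V U).symm
  rw [triangleGram, triangleGram, hU, hW]
  generalize V - U = a, W - U = b
  simp only [map_neg, map_sub, LinearMap.neg_apply, LinearMap.sub_apply, hB.eq b a]
  ring

end TriangleGram

section Spread

variable {F M : Type*} [Field F] [AddCommGroup M] [Module F M] (B : LinearMap.BilinForm F M)

theorem quadrance_comm (U W : M) : quadrance B U W = quadrance B W U := by
  simp only [quadrance, ← neg_sub U W, map_neg, LinearMap.neg_apply, neg_neg]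

theorem spread_eq_triangleGram_div {U V W : M} (hUV : quadrance B U V ≠ 0)
    (hUW : quadrance B U W ≠ 0) :
    spread B U V U W = triangleGram B U V W / (quadrance B U V * quadrance B U W) := by
  rw [spread, one_sub_div (mul_ne_zero hUV hUW)]
  rfl

theorem spread_div_quadrance {U V W : M} (hUV : quadrance B U V ≠ 0)
    (hUW : quadrance B U W ≠ 0) :
    spread B U V U W / quadrance B V W =
      triangleGram B U V W / (quadrance B U V * quadrance B U W * quadrance B V W) := by
  rw [spread_eq_triangleGram_div B hUV hUW, div_div]

end Spread

theorem spread_law_general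
    {F : Type*} [Field F]
    {M : Type*} [AddCommGroup M] [Module F M]
    (B : LinearMap.BilinForm F M) (hsym : ∀ x y : M, B x y = B y x)
    (U V W : M)
    (hQU : quadrance B V W ≠ 0) (hQV : quadrance B U W ≠ 0)
    (hQW : quadrance B U V ≠ 0)
 :
    spread B U V U W / quadrance B V W = spread B V U V W / quadrance B U W ∧
      spread B V U V W / quadrance B U W = spread B W U W V / quadrance B U V := by
  have hB : B.IsSymm := ⟨hsym⟩
  have hVU : quadrance B V U ≠ 0 := by rwa [quadrance_comm]
  have hWU : quadrance B W U ≠ 0 := by rwa [quadrance_comm]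
  have hWV : quadrance B W V ≠ 0 := by rwa [quadrance_comm]
  rw [spread_div_quadrance B hQW hQV, spread_div_quadrance B hVU hQU,
    spread_div_quadrance B hWU hWV, triangleGram_shift hB U V W, triangleGram_shift hB U W V,
    triangleGram_swap hB U W V, quadrance_comm B V U, quadrance_comm B W U, quadrance_comm B W V]
  constructor <;> ring

theorem spread_law
    {F : Type*} [Field F] (hchar : (2 : F) ≠ 0)
    {M : Type*} [AddCommGroup M] [Module F M]
    (B : LinearMap.BilinForm F M) (hsym : ∀ x y : M, B x y = B y x)
    (U V W : M) (hUV : U ≠ V) (hUW : U ≠ W) (hVW : V ≠ W)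
    (hncol : ∀ a b : F, a • (V - U) + b • (W - U) = 0 → a = 0 ∧ b = 0)
    (hQU : quadrance B V W ≠ 0) (hQV : quadrance B U W ≠ 0)
    (hQW : quadrance B U V ≠ 0)
 :
    spread B U V U W / quadrance B V W = spread B V U V W / quadrance B U W ∧
      spread B V U V W / quadrance B U W = spread B W U W V / quadrance B U V :=
  spread_law_general B hsym U V W hQU hQV hQW
end

section
/- (Thales' theorem) If a non-null triangle U, V, W has spread s_W = 1, then s_U = Q_U/Q_W. -/
theorem thales_theorem
    {F : Type*} [Field F] (hchar : (2 : F) ≠ 0)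
    {M : Type*} [AddCommGroup M] [Module F M]
    (B : LinearMap.BilinForm F M) (hsym : ∀ x y : M, B x y = B y x)
    (U V W : M) (hUV : U ≠ V) (hUW : U ≠ W) (hVW : V ≠ W)
    (hncol : ∀ a b : F, a • (V - U) + b • (W - U) = 0 → a = 0 ∧ b = 0)
    (hQU : quadrance B V W ≠ 0) (hQV : quadrance B U W ≠ 0)
    (hQW : quadrance B U V ≠ 0)
    (hsW : spread B W U W V = 1) :
    spread B U V U W = quadrance B V W / quadrance B U V := by
  have flip : ∀ x y : M, B (x - y) (x - y) = B (y - x) (y - x) := by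
    intro x y
    rw [← neg_sub y x]; simp; ring
  -- orthogonality at W
  have horth : B (U - W) (V - W) = 0 := by
    unfold spread at hsW
    have hq1 : quadrance B W U ≠ 0 := by
      unfold quadrance at hQV ⊢; rwa [flip]
    have hq2 : quadrance B W V ≠ 0 := by
      unfold quadrance at hQU ⊢; rwa [flip]
    have h0 : (B (U - W) (V - W)) ^ 2 / (quadrance B W U * quadrance B W V) = 0 :=
      sub_eq_self.mp hsW
    have hden : quadrance B W U * quadrance B W V ≠ 0 := mul_ne_zero hq1 hq2
    have := (div_eq_zero_iff.mp h0).resolve_right hden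
    exact pow_eq_zero_iff (n := 2) (by norm_num) |>.mp this
  have horth' : B (V - W) (W - U) = 0 := by
    rw [hsym, ← neg_sub U W, map_neg, LinearMap.neg_apply, horth, neg_zero]
  have e1 : B (V - U) (W - U) = B (W - U) (W - U) := by
    have h : V - U = (V - W) + (W - U) := by abel
    rw [h, map_add, LinearMap.add_apply, horth', zero_add]
  have e2 : B (V - U) (V - U) = B (W - U) (W - U) + B (W - V) (W - V) := by
    have h : V - U = (V - W) + (W - U) := by abel
    have h2 : B (W - U) (V - W) = 0 := by
      rw [hsym (W - U) (V - W)]; exact horth'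
    rw [h]
    simp only [map_add, LinearMap.add_apply]
    rw [horth', h2, flip V W]
    ring
  unfold spread quadrance
  unfold quadrance at hQU hQV hQW
  rw [e2] at hQW
  rw [e1, e2]
  set α := B (W - U) (W - U) with hα
  set β := B (W - V) (W - V) with hβ
  field_simp
  ring
end

section
/- (Cross law) Suppose a non-null triangle U, V, W has quadrances Q_W = Q(U,V), Q_U = Q(V,W), Q_V = Q(U,W) and spread s_W. Then (Q_U + Q_V − Q_W)² = 4·Q_U·Q_V·(1 − s_W). -/
theorem cross_law
    {F : Type*} [Field F] (hchar : (2 : F) ≠ 0)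
    {M : Type*} [AddCommGroup M] [Module F M]
    (B : LinearMap.BilinForm F M) (hsym : ∀ x y : M, B x y = B y x)
    (U V W : M) (hUV : U ≠ V) (hUW : U ≠ W) (hVW : V ≠ W)
    (hncol : ∀ a b : F, a • (V - U) + b • (W - U) = 0 → a = 0 ∧ b = 0)
    (hQU : quadrance B V W ≠ 0) (hQV : quadrance B U W ≠ 0)
    (hQW : quadrance B U V ≠ 0)
 :
    (quadrance B V W + quadrance B U W - quadrance B U V) ^ 2 =
      4 * quadrance B V W * quadrance B U W * (1 - spread B W U W V) := by
  have e1 : quadrance B V W = B W W - 2 * B V W + B V V := by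
    simp only [quadrance, map_sub, LinearMap.sub_apply, hsym W V]; ring
  have e2 : quadrance B U W = B W W - 2 * B U W + B U U := by
    simp only [quadrance, map_sub, LinearMap.sub_apply, hsym W U]; ring
  have e3 : quadrance B U V = B V V - 2 * B U V + B U U := by
    simp only [quadrance, map_sub, LinearMap.sub_apply, hsym V U]; ring
  have e4 : quadrance B W U = quadrance B U W := by
    simp only [quadrance, map_sub, LinearMap.sub_apply, hsym W U]; ring
  have e5 : quadrance B W V = quadrance B V W := by
    simp only [quadrance, map_sub, LinearMap.sub_apply, hsym W V]; ring
  have e6 : B (U - W) (V - W) = B U V - B U W - B V W + B W W := by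
    simp only [map_sub, LinearMap.sub_apply, hsym W V, hsym W U]; ring
  rw [spread, e4, e5, e6]
  rw [e1] at hQU; rw [e2] at hQV; rw [e1, e2, e3]
  field_simp
  ring
end
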